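/- arXiv:1805.01729 — 5 statements merged into one kernel-verified Lean document; each statement's English description precedes it below -/
import Mathlib

section
/- Let d ≥ 1, N ≥ 1, and let K : ℝ^d → ℝ be radially symmetric, i.e. K(x) = γ(‖x‖₂²) for some γ : ℝ_{≥0} → ℝ_{≥0}. Let Φ assign to each probability density ρ on ℝ^d and each point y ∈ ℝ^d an invertible matrix Φ(ρ, y) ∈ GL(d,ℝ), satisfying the scaling axiom (I3): for every A ∈ GL(d,ℝ) and y ∈ ℝ^d, writing φ₁ = Φ(ρ, y) and φ₂ = Φ(|det A| ρ(A·), A^{−1}y), one has φ₂ φ₂ᵀ = A^{−1} φ₁ φ₁ᵀ A^{−ᵀ}. Let ρ₁ be a probability density, A ∈ GL(d,ℝ), ρ₃(x) = |det A| ρ₁(Ax), sample points y_{1,n} ∈ ℝ^d and y_{3,n} = A^{−1} y_{1,n}, and bandwidth matrices h_{j,n} = N^{−1/(d+4)} Φ(ρ_j, y_{j,n}) for j ∈ {1,3}. Let ρ̂_j denote the variable kernel density estimate built from (y_{j,n}) and (h_{j,n}). Then ρ̂₃(x) = |det A| ρ̂₁(Ax) for all x ∈ ℝ^d. -/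
open MeasureTheory Matrix

/-- The variable kernel density estimate (VKDE) built from kernel `K`,
sample points `y n` and invertible bandwidth matrices `h n`:
`ρ̂(x) = (1/N) ∑ₙ |det hₙ|⁻¹ K(hₙ⁻¹(x − yₙ))`. -/
noncomputable def vkde (d N : ℕ) (K : (Fin d → ℝ) → ℝ)
    (y : Fin N → Fin d → ℝ) (h : Fin N → Matrix (Fin d) (Fin d) ℝ)
    (x : Fin d → ℝ) : ℝ :=
  (1 / N : ℝ) * ∑ n, |(h n).det|⁻¹ * K ((h n)⁻¹.mulVec (x - y n))

lemma aux_det {d : ℕ} (A φ₁ φ₂ : Matrix (Fin d) (Fin d) ℝ)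
    (hA : IsUnit A.det)
    (H : φ₂ * φ₂ᵀ = A⁻¹ * φ₁ * φ₁ᵀ * (A⁻¹)ᵀ) :
    |φ₂.det| = |A.det|⁻¹ * |φ₁.det| := by
  have h2 : φ₂.det ^ 2 = (A⁻¹.det * φ₁.det) ^ 2 := by
    have := congrArg Matrix.det H
    simp only [Matrix.det_mul, Matrix.det_transpose] at this
    ring_nf
    ring_nf at this
    linarith
  have habs : |φ₂.det| = |A⁻¹.det * φ₁.det| := by
    rw [← Real.sqrt_sq_eq_abs, ← Real.sqrt_sq_eq_abs, h2]
  rw [habs, abs_mul, Matrix.det_nonsing_inv, Ring.inverse_eq_inv', abs_inv]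

lemma aux_quad {d : ℕ} (A φ₁ φ₂ : Matrix (Fin d) (Fin d) ℝ)
    (hA : IsUnit A.det) (hφ₁ : IsUnit φ₁.det) (hφ₂ : IsUnit φ₂.det)
    (H : φ₂ * φ₂ᵀ = A⁻¹ * φ₁ * φ₁ᵀ * (A⁻¹)ᵀ) (u : Fin d → ℝ) :
    ∑ i, (φ₂⁻¹.mulVec u) i ^ 2 = ∑ i, (φ₁⁻¹.mulVec (A.mulVec u)) i ^ 2 := by
  have key : ∀ (M : Matrix (Fin d) (Fin d) ℝ) (v : Fin d → ℝ),
      ∑ i, (M.mulVec v) i ^ 2 = ((Mᵀ * M).mulVec v) ⬝ᵥ v := by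
    intro M v
    have : ∑ i, (M.mulVec v) i ^ 2 = (M.mulVec v) ⬝ᵥ (M.mulVec v) := by
      simp [dotProduct, sq]
    rw [this, Matrix.dotProduct_mulVec, ← Matrix.mulVec_transpose,
      Matrix.mulVec_mulVec]
  rw [key, key]
  have hM : (φ₂⁻¹)ᵀ * φ₂⁻¹ = (φ₂ * φ₂ᵀ)⁻¹ := by
    rw [Matrix.mul_inv_rev, Matrix.transpose_nonsing_inv]
  have hR : (φ₂ * φ₂ᵀ)⁻¹ = Aᵀ * ((φ₁⁻¹)ᵀ * φ₁⁻¹) * A := by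
    rw [H]
    rw [Matrix.mul_inv_rev, Matrix.mul_inv_rev, Matrix.mul_inv_rev,
      Matrix.transpose_nonsing_inv, Matrix.transpose_nonsing_inv,
      Matrix.nonsing_inv_nonsing_inv _ hA,
      Matrix.nonsing_inv_nonsing_inv _ (by simpa using hA)]
    noncomm_ring
  rw [hM, hR]
  rw [Matrix.dotProduct_mulVec (((φ₁⁻¹)ᵀ * φ₁⁻¹).mulVec (A.mulVec u)) A u,
    ← Matrix.mulVec_transpose, Matrix.mulVec_mulVec, Matrix.mulVec_mulVec]

theorem vkde_test : True := trivial

/-- **Invariance of the VKDE under linear scaling (Theorem 3.6 (i), scaling part).**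
If `K` is radially symmetric and the bandwidth selector `Φ` satisfies the
scaling axiom (I3) on probability densities, then for
`ρ₃ = |det A| ρ₁(A ·)`, `y₃ₙ = A⁻¹ y₁ₙ` and bandwidths
`h_{j,n} = N^{−1/(d+4)} Φ(ρ_j, y_{j,n})` one has `ρ̂₃(x) = |det A| ρ̂₁(Ax)`. -/
theorem vkde_scaling_invariance
    (d N : ℕ) (hd : 1 ≤ d) (hN : 1 ≤ N)
    (K : (Fin d → ℝ) → ℝ)
    (γ : ℝ → ℝ) (hγ_nonneg : ∀ r, 0 ≤ r → 0 ≤ γ r)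
    (hK_rad : ∀ v : Fin d → ℝ, K v = γ (∑ i, v i ^ 2))
    (Φ : ((Fin d → ℝ) → ℝ) → (Fin d → ℝ) → Matrix (Fin d) (Fin d) ℝ)
    (hΦ_inv : ∀ ρ y, IsUnit (Φ ρ y).det)
    (hI3 : ∀ (ρ : (Fin d → ℝ) → ℝ), (∀ z, 0 ≤ ρ z) → (∫ z, ρ z) = 1 →
      ∀ (A : Matrix (Fin d) (Fin d) ℝ), IsUnit A.det → ∀ y : Fin d → ℝ,
      Φ (fun z => |A.det| * ρ (A.mulVec z)) (A⁻¹.mulVec y) *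
          (Φ (fun z => |A.det| * ρ (A.mulVec z)) (A⁻¹.mulVec y))ᵀ
        = A⁻¹ * Φ ρ y * (Φ ρ y)ᵀ * (A⁻¹)ᵀ)
    (ρ₁ : (Fin d → ℝ) → ℝ) (hρ₁_nonneg : ∀ z, 0 ≤ ρ₁ z)
    (hρ₁_int : (∫ z, ρ₁ z) = 1)
    (A : Matrix (Fin d) (Fin d) ℝ) (hA : IsUnit A.det)
    (y₁ : Fin N → Fin d → ℝ)
    (x : Fin d → ℝ) :
    vkde d N K (fun n => A⁻¹.mulVec (y₁ n))
        (fun n => (N : ℝ) ^ (-(1 : ℝ) / ((d : ℝ) + 4)) •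
          Φ (fun z => |A.det| * ρ₁ (A.mulVec z)) (A⁻¹.mulVec (y₁ n))) x
      =
    |A.det| * vkde d N K y₁
        (fun n => (N : ℝ) ^ (-(1 : ℝ) / ((d : ℝ) + 4)) • Φ ρ₁ (y₁ n))
        (A.mulVec x) := by
  have hN0 : (0:ℝ) < (N:ℝ) := by exact_mod_cast hN
  set c : ℝ := (N : ℝ) ^ (-(1 : ℝ) / ((d : ℝ) + 4)) with hc
  have hc0 : 0 < c := Real.rpow_pos_of_pos hN0 _
  have hcne : c ≠ 0 := ne_of_gt hc0
  have hinv : ∀ (M : Matrix (Fin d) (Fin d) ℝ), IsUnit M.det →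
      (c • M)⁻¹ = c⁻¹ • M⁻¹ := fun M hM =>
    Matrix.inv_eq_left_inv (by
      rw [Matrix.smul_mul, Matrix.mul_smul, smul_smul, inv_mul_cancel₀ hcne,
        one_smul, Matrix.nonsing_inv_mul _ hM])
  unfold vkde
  rw [mul_left_comm]
  congr 1
  rw [Finset.mul_sum]
  refine Finset.sum_congr rfl fun n _ => ?_
  simp only
  have H := hI3 ρ₁ hρ₁_nonneg hρ₁_int A hA (y₁ n)
  set φ₁ := Φ ρ₁ (y₁ n) with hφ₁
  set φ₂ := Φ (fun z => |A.det| * ρ₁ (A.mulVec z)) (A⁻¹.mulVec (y₁ n)) with hφ₂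
  have hdet := aux_det A φ₁ φ₂ hA H
  have hquad := aux_quad A φ₁ φ₂ hA (hΦ_inv _ _) (hΦ_inv _ _) H
    (x - A⁻¹.mulVec (y₁ n))
  have hu : A.mulVec (x - A⁻¹.mulVec (y₁ n)) = A.mulVec x - y₁ n := by
    rw [Matrix.mulVec_sub, Matrix.mulVec_mulVec, Matrix.mul_nonsing_inv _ hA,
      Matrix.one_mulVec]
  have hK : K ((c • φ₂)⁻¹.mulVec (x - A⁻¹.mulVec (y₁ n)))
      = K ((c • φ₁)⁻¹.mulVec (A.mulVec x - y₁ n)) := by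
    rw [hinv _ (hΦ_inv _ _), hinv _ (hΦ_inv _ _), hK_rad, hK_rad]
    congr 1
    rw [Matrix.smul_mulVec, Matrix.smul_mulVec]
    simp only [Pi.smul_apply, smul_eq_mul, mul_pow, ← Finset.mul_sum]
    rw [← hu, hquad]
  have h1ne : |φ₁.det| ≠ 0 := by
    simpa using (hΦ_inv ρ₁ (y₁ n)).ne_zero
  have hAne : |A.det| ≠ 0 := by simpa using hA.ne_zero
  have hdetfac : |(c • φ₂).det|⁻¹ = |A.det| * |(c • φ₁).det|⁻¹ := by
    rw [Matrix.det_smul, Matrix.det_smul, abs_mul, abs_mul, hdet]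
    have hcd : |c ^ Fintype.card (Fin d)| ≠ 0 := by positivity
    field_simp
  rw [hdetfac, hK]
  ring
end

section
/- Let d ≥ 1 and κ > 0. Let m : ρ ↦ μ_ρ assign to each function ρ : ℝ^d → ℝ a measurable adaptation function μ_ρ : ℝ^d → GL(d,ℝ), and define Φ(ρ, y) = |κ ρ(y) / det μ_ρ(y)|^{−1/(d+4)} μ_ρ(y)^{−1} whenever ρ(y) ≠ 0. Suppose m satisfies the locality axiom (A4): for every family ρ^{(t)} = ∑_{k=1}^K ρ_k(· − a_k^{(t)}) with a_k^{(t)} ∈ ℝ^d and ‖a_k^{(t)} − a_ℓ^{(t)}‖ → ∞ (t → ∞) for k ≠ ℓ, one has μ_{ρ^{(t)}}(x + a_k^{(t)}) → μ_{ρ_k}(x) in GL(d,ℝ) for each k and each x. Let ρ_1,…,ρ_K : ℝ^d → ℝ be continuous functions with ρ_j(z) → 0 as ‖z‖ → ∞ for each j, let a_k^{(t)} be as above, fix k and y ∈ ℝ^d with ρ_k(y) ≠ 0. Then Φ satisfies the locality axiom (I4) at this point: Φ(ρ^{(t)}, y + a_k^{(t)}) → Φ(ρ_k, y) as t → ∞.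 -/
open Matrix Filter Topology

/-- The bandwidth selection rule of the paper,
`Φ(ρ, y) = |κ ρ(y) / det μ_ρ(y)|^{−1/(d+4)} μ_ρ(y)⁻¹`,
built from an adaptation map `m : ρ ↦ μ_ρ` and a constant `κ`. -/
noncomputable def bandwidthRule (d : ℕ) (κ : ℝ)
    (m : ((Fin d → ℝ) → ℝ) → (Fin d → ℝ) → Matrix (Fin d) (Fin d) ℝ)
    (ρ : (Fin d → ℝ) → ℝ) (y : Fin d → ℝ) : Matrix (Fin d) (Fin d) ℝ :=
  |κ * ρ y / (m ρ y).det| ^ (-(1 : ℝ) / ((d : ℝ) + 4)) • (m ρ y)⁻¹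

/-- **(A4) ⇒ (I4):** if the adaptation map `m : ρ ↦ μ_ρ` satisfies the locality
axiom (A4), then the bandwidth selection rule
`Φ(ρ, y) = |κ ρ(y) / det μ_ρ(y)|^{−1/(d+4)} μ_ρ(y)⁻¹` satisfies the locality
axiom (I4): for continuous summands `ρ_j` vanishing at infinity and centers
`a_j(t)` whose mutual distances tend to infinity,
`Φ(∑_j ρ_j(· − a_j(t)), y + a_k(t)) → Φ(ρ_k, y)` as `t → ∞`,
wherever `ρ_k(y) ≠ 0`. -/
theorem bandwidthRule_locality
    (d : ℕ) (hd : 1 ≤ d) (κ : ℝ) (hκ : 0 < κ)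
    (m : ((Fin d → ℝ) → ℝ) → (Fin d → ℝ) → Matrix (Fin d) (Fin d) ℝ)
    (hm_meas : ∀ F, Measurable (fun x i j => m F x i j))
    (hm_inv : ∀ F x, IsUnit (m F x).det)
    (hA4 : ∀ (K : ℕ) (f : Fin K → (Fin d → ℝ) → ℝ)
      (a : Fin K → ℝ → Fin d → ℝ),
      (∀ k ℓ, k ≠ ℓ → Tendsto (fun t => ‖a k t - a ℓ t‖) atTop atTop) →
      ∀ (k : Fin K) (x : Fin d → ℝ),
      Tendsto (fun t => m (fun z => ∑ j, f j (z - a j t)) (x + a k t)) atTop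
        (𝓝 (m (f k) x)))
    (K : ℕ) (ρ : Fin K → (Fin d → ℝ) → ℝ)
    (hρ_cont : ∀ j, Continuous (ρ j))
    (hρ_decay : ∀ j, Tendsto (ρ j) (cocompact (Fin d → ℝ)) (𝓝 0))
    (a : Fin K → ℝ → Fin d → ℝ)
    (ha : ∀ k ℓ, k ≠ ℓ → Tendsto (fun t => ‖a k t - a ℓ t‖) atTop atTop)
    (k : Fin K) (y : Fin d → ℝ) (hy : ρ k y ≠ 0) :
    Tendsto
      (fun t => bandwidthRule d κ m (fun z => ∑ j, ρ j (z - a j t)) (y + a k t))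
      atTop (𝓝 (bandwidthRule d κ m (ρ k) y)) := by
  set F : ℝ → (Fin d → ℝ) → ℝ := fun t z => ∑ j, ρ j (z - a j t) with hF
  have hM : Tendsto (fun t => m (F t) (y + a k t)) atTop (𝓝 (m (ρ k) y)) :=
    hA4 K ρ a ha k y
  -- convergence of the density values
  have hρ : Tendsto (fun t => F t (y + a k t)) atTop (𝓝 (ρ k y)) := by
    have hlim : ∀ j : Fin K, Tendsto (fun t => ρ j (y + a k t - a j t)) atTop
        (𝓝 (if j = k then ρ k y else 0)) := by
      intro j
      by_cases hjk : j = k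
      · subst hjk
        simp
      · simp only [hjk, if_false]
        apply (hρ_decay j).comp
        rw [← Metric.cobounded_eq_cocompact, ← tendsto_norm_atTop_iff_cobounded]
        apply tendsto_atTop_mono (f := fun t => ‖a k t - a j t‖ - ‖y‖)
        · intro t
          have h1 := norm_sub_le (y + a k t - a j t) y
          have : y + a k t - a j t - y = a k t - a j t := by abel
          rw [this] at h1
          linarith
        · exact tendsto_atTop_add_const_right _ _ (ha k j (fun h => hjk h.symm))
    have := tendsto_finset_sum Finset.univ (fun j _ => hlim j)
    simpa [hF, Finset.sum_ite_eq'] using this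
  -- convergence of determinants
  have hdet : Tendsto (fun t => (m (F t) (y + a k t)).det) atTop
      (𝓝 (m (ρ k) y).det) :=
    (Continuous.matrix_det continuous_id).continuousAt.tendsto.comp hM
  have hdet_ne : (m (ρ k) y).det ≠ 0 := (hm_inv (ρ k) y).ne_zero
  -- convergence of the scalar factor
  have hc : Tendsto (fun t => κ * F t (y + a k t) / (m (F t) (y + a k t)).det)
      atTop (𝓝 (κ * ρ k y / (m (ρ k) y).det)) :=
    ((tendsto_const_nhds.mul hρ).div hdet hdet_ne)
  have hl_ne : κ * ρ k y / (m (ρ k) y).det ≠ 0 :=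
    div_ne_zero (mul_ne_zero hκ.ne' hy) hdet_ne
  have hscalar : Tendsto
      (fun t => |κ * F t (y + a k t) / (m (F t) (y + a k t)).det| ^
        (-(1 : ℝ) / ((d : ℝ) + 4))) atTop
      (𝓝 (|κ * ρ k y / (m (ρ k) y).det| ^ (-(1 : ℝ) / ((d : ℝ) + 4)))) := by
    have hca : ContinuousAt (fun x : ℝ => |x| ^ (-(1 : ℝ) / ((d : ℝ) + 4)))
        (κ * ρ k y / (m (ρ k) y).det) :=
      (Real.continuousAt_rpow_const _ _ (Or.inl (abs_ne_zero.2 hl_ne))).comp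
        continuous_abs.continuousAt
    exact hca.tendsto.comp hc
  -- convergence of the inverses
  have hinv : Tendsto (fun t => (m (F t) (y + a k t))⁻¹) atTop
      (𝓝 (m (ρ k) y)⁻¹) := by
    have h : ContinuousAt Ring.inverse (m (ρ k) y).det := by
      have := NormedRing.inverse_continuousAt (hm_inv (ρ k) y).unit
      rwa [(hm_inv (ρ k) y).unit_spec] at this
    exact (continuousAt_matrix_inv _ h).tendsto.comp hM
  simpa only [bandwidthRule] using hscalar.smul hinv
end

section
/- Let d ≥ 2, 1 ≤ k < d, let δ_1, …, δ_k > 0 and δ_{k+1}, …, δ_d ≥ 0 with ∑_{j=k+1}^d δ_j > 0, let U be a real orthogonal d×d matrix, and set H = U · diag(δ_1, …, δ_k, −δ_{k+1}, …, −δ_d) · Uᵀ. Define δ = (∑_{j=k+1}^d δ_j)/k, B̃ = U · diag(δ_1^{−1/2}, …, δ_k^{−1/2}, δ^{−1/2}, …, δ^{−1/2}) · Uᵀ, and B = (det B̃)^{−1/d} · B̃. Then det B = 1 and tr(Bᵀ H B) = 0; that is, B normalizes the kernel shape so that the leading bias term of the kernel density estimate vanishes at a saddle point of the density. -/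
open Matrix

/-- **Bias-annihilating kernel shape at a saddle point (Case 2 of Section 4).**
For an indefinite Hessian `H = U diag(δ₁,…,δ_k,−δ_{k+1},…,−δ_d) Uᵀ` with
`δ₁,…,δ_k > 0`, `δ_{k+1},…,δ_d ≥ 0`, `∑_{j>k} δ_j > 0` and `U` orthogonal,
setting `δ = (∑_{j>k} δ_j)/k`,
`B̃ = U diag(δ₁^{−1/2},…,δ_k^{−1/2},δ^{−1/2},…,δ^{−1/2}) Uᵀ` and
`B = (det B̃)^{−1/d} B̃`, one has `det B = 1` and `tr(Bᵀ H B) = 0`. -/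
theorem saddle_shape_annihilates_bias
    (d k : ℕ) (hd : 2 ≤ d) (hk : 1 ≤ k) (hkd : k < d)
    (δ : Fin d → ℝ)
    (hδ_pos : ∀ j : Fin d, (j : ℕ) < k → 0 < δ j)
    (hδ_nonneg : ∀ j : Fin d, k ≤ (j : ℕ) → 0 ≤ δ j)
    (hδ_sum : 0 < ∑ j ∈ Finset.univ.filter (fun j : Fin d => k ≤ (j : ℕ)), δ j)
    (U : Matrix (Fin d) (Fin d) ℝ)
    (hU : U ∈ Matrix.orthogonalGroup (Fin d) ℝ)
    (H : Matrix (Fin d) (Fin d) ℝ)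
    (hH : H = U * Matrix.diagonal
      (fun j : Fin d => if (j : ℕ) < k then δ j else -δ j) * Uᵀ)
    (δbar : ℝ)
    (hδbar : δbar = (∑ j ∈ Finset.univ.filter (fun j : Fin d => k ≤ (j : ℕ)), δ j) / k)
    (Btil B : Matrix (Fin d) (Fin d) ℝ)
    (hBtil : Btil = U * Matrix.diagonal
      (fun j : Fin d => if (j : ℕ) < k then (δ j) ^ (-(1 : ℝ) / 2)
        else δbar ^ (-(1 : ℝ) / 2)) * Uᵀ)
    (hB : B = (Btil.det ^ (-(1 : ℝ) / (d : ℝ))) • Btil) :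
    B.det = 1 ∧ (Bᵀ * H * B).trace = 0 := by
  have hk0 : (0 : ℝ) < (k : ℝ) := by exact_mod_cast hk
  have hδbar_pos : 0 < δbar := by
    rw [hδbar]; positivity
  have hUtU : Uᵀ * U = 1 := by
    rw [Matrix.mem_orthogonalGroup_iff'] at hU
    simpa using hU
  have hUUt : U * Uᵀ = 1 := by
    rw [Matrix.mem_orthogonalGroup_iff] at hU
    simpa using hU
  set g : Fin d → ℝ := fun j : Fin d => if (j : ℕ) < k then (δ j) ^ (-(1 : ℝ) / 2)
        else δbar ^ (-(1 : ℝ) / 2) with hg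
  have hg_pos : ∀ j, 0 < g j := by
    intro j
    by_cases hj : (j : ℕ) < k
    · simp only [hg, if_pos hj]
      exact Real.rpow_pos_of_pos (hδ_pos j hj) _
    · simp only [hg, if_neg hj]
      exact Real.rpow_pos_of_pos hδbar_pos _
  -- determinant of Btil
  have hdetU : U.det * U.det = 1 := by
    have := congrArg Matrix.det hUUt
    simpa [Matrix.det_mul, Matrix.det_transpose] using this
  have hdetBtil : Btil.det = ∏ j, g j := by
    rw [hBtil, Matrix.det_mul, Matrix.det_mul, Matrix.det_diagonal, Matrix.det_transpose]
    rw [show U.det * (∏ j, g j) * U.det = (∏ j, g j) * (U.det * U.det) by ring, hdetU,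
      mul_one]
  have hdetBtil_pos : 0 < Btil.det := by
    rw [hdetBtil]
    exact Finset.prod_pos fun j _ => hg_pos j
  -- det B = 1
  have hdetB : B.det = 1 := by
    rw [hB, Matrix.det_smul, hdetBtil]
    simp only [Fintype.card_fin]
    rw [← Real.rpow_natCast ((∏ j, g j) ^ (-(1 : ℝ) / (d : ℝ))) d,
      ← Real.rpow_mul (le_of_lt (by rw [← hdetBtil]; exact hdetBtil_pos))]
    have hd0 : (d : ℝ) ≠ 0 := by positivity
    rw [div_mul_cancel₀ _ hd0]
    rw [Real.rpow_neg_one]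
    rw [← hdetBtil]
    field_simp
  refine ⟨hdetB, ?_⟩
  -- trace part
  set Λ : Fin d → ℝ := fun j : Fin d => if (j : ℕ) < k then δ j else -δ j with hΛ
  have hBtilT : Btilᵀ = Btil := by
    rw [hBtil]
    simp [Matrix.transpose_mul, Matrix.mul_assoc]
  have key : (Btilᵀ * H * Btil).trace = 0 := by
    have hmid : Btilᵀ * H * Btil
        = U * (Matrix.diagonal (fun j => g j * Λ j * g j)) * Uᵀ := by
      rw [hBtilT, hBtil, hH]
      have : U * Matrix.diagonal g * Uᵀ * (U * Matrix.diagonal Λ * Uᵀ) *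
          (U * Matrix.diagonal g * Uᵀ)
          = U * (Matrix.diagonal g * (Uᵀ * U) * Matrix.diagonal Λ *
            (Uᵀ * U) * Matrix.diagonal g) * Uᵀ := by
        simp only [Matrix.mul_assoc]
      rw [this, hUtU]
      simp only [Matrix.mul_one, Matrix.one_mul]
      congr 1
      rw [Matrix.diagonal_mul_diagonal, Matrix.diagonal_mul_diagonal]
    rw [hmid]
    rw [Matrix.trace_mul_comm, ← Matrix.mul_assoc, hUtU, Matrix.one_mul,
      Matrix.trace_diagonal]
    have hsplit := Finset.sum_filter_add_sum_filter_not Finset.univ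
      (fun j : Fin d => (j : ℕ) < k) (fun j => g j * Λ j * g j)
    rw [← hsplit]
    have h1 : ∑ j ∈ Finset.univ.filter (fun j : Fin d => (j : ℕ) < k),
        g j * Λ j * g j = k := by
      have hcard : (Finset.univ.filter (fun j : Fin d => (j:ℕ) < k)).card = k := by
        have : (Finset.univ.filter (fun j : Fin d => (j:ℕ) < k))
            = Finset.Iio (⟨k, hkd⟩ : Fin d) := by
          ext j; simp [Fin.lt_def]
        rw [this, Fin.card_Iio]
      have hone : ∀ j ∈ Finset.univ.filter (fun j : Fin d => (j : ℕ) < k),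
          g j * Λ j * g j = 1 := by
        intro j hj
        simp only [Finset.mem_filter] at hj
        have hjk := hj.2
        have hpos := hδ_pos j hjk
        simp only [hg, hΛ, if_pos hjk]
        rw [mul_comm ((δ j) ^ (-(1:ℝ)/2)) (δ j), mul_assoc,
          ← Real.rpow_add hpos,
          show (-(1:ℝ)/2 + -(1:ℝ)/2) = -1 by ring, Real.rpow_neg_one]
        exact mul_inv_cancel₀ (ne_of_gt hpos)
      rw [Finset.sum_congr rfl hone, Finset.sum_const, hcard,
        nsmul_eq_mul, mul_one]
    have h2 : ∑ j ∈ Finset.univ.filter (fun j : Fin d => ¬ (j : ℕ) < k),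
        g j * Λ j * g j = -(k : ℝ) := by
      have heq : ∀ j ∈ Finset.univ.filter (fun j : Fin d => ¬ (j : ℕ) < k),
          g j * Λ j * g j = -(δ j / δbar) := by
        intro j hj
        simp only [Finset.mem_filter, not_lt] at hj
        have hjk := hj.2
        simp only [hg, hΛ, if_neg (not_lt.mpr hjk)]
        rw [mul_comm (δbar ^ (-(1:ℝ)/2)) (-δ j), mul_assoc,
          ← Real.rpow_add hδbar_pos,
          show (-(1:ℝ)/2 + -(1:ℝ)/2) = -1 by ring, Real.rpow_neg_one]
        field_simp
      rw [Finset.sum_congr rfl heq]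
      have hfilter : (Finset.univ.filter (fun j : Fin d => ¬ (j : ℕ) < k))
          = (Finset.univ.filter (fun j : Fin d => k ≤ (j : ℕ))) := by
        ext j; simp [not_lt]
      rw [hfilter]
      have hs : (∑ j ∈ Finset.univ.filter (fun j : Fin d => k ≤ (j : ℕ)), δ j)
          = δbar * k := by
        rw [hδbar]; field_simp
      have hsum : ∑ j ∈ Finset.univ.filter (fun j : Fin d => k ≤ (j : ℕ)), -(δ j / δbar)
          = -((∑ j ∈ Finset.univ.filter (fun j : Fin d => k ≤ (j : ℕ)), δ j) / δbar) := by
        simp [Finset.sum_div]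
      rw [hsum, hs]
      field_simp
    rw [h1, h2]
    ring
  rw [hB]
  simp only [Matrix.transpose_smul, Matrix.smul_mul, Matrix.mul_smul,
    Matrix.trace_smul, key, smul_eq_mul, mul_zero]
end

section
/- Let d ≥ 1. For y ∈ ℝ^d and a symmetric positive definite d×d matrix Q let G_{y,Q}(x) = (2π)^{−d/2} (det Q)^{−1/2} exp(−(1/2)(x − y)ᵀ Q^{−1} (x − y)), and write G_Q = G_{0,Q}. Let Q₁, Q₂, Q₃ be symmetric positive definite d×d matrices and y₁, y₂ ∈ ℝ^d, and set Q₁₂ = (Q₁^{−1} + Q₂^{−1})^{−1} and y₁₂ = Q₁₂ (Q₁^{−1} y₁ + Q₂^{−1} y₂). Then for every x ∈ ℝ^d: ∫_{ℝ^d} G_{y₁,Q₁}(y) G_{y₂,Q₂}(y) G_{Q₃}(x − y)² dy = (4π)^{−d/2} (det Q₃)^{−1/2} G_{Q₁+Q₂}(y₁ − y₂) G_{y₁₂, Q₁₂ + Q₃/2}(x). -/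
/-!
Completing the square shows that a product of two Gaussian densities is again one, up to a
constant: `G_{a,A} G_{b,B} = G_{A+B}(a - b) G_{c,C}` with `C = (A⁻¹ + B⁻¹)⁻¹` and
`c = C (A⁻¹ a + B⁻¹ b)`; likewise `G_Q² = (4π)^{-d/2} (det Q)^{-1/2} G_{Q/2}`. Applying the
first identity to `G_{y₁,Q₁} G_{y₂,Q₂}`, the second to `G_{Q₃}(x - y)²`, and the first once more
under the integral, where the remaining density integrates to `1`, gives the formula.
-/

open MeasureTheory Matrix Real

/-- The Gaussian density on `ℝ^d` with mean `y` and covariance matrix `Q`: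
`G_{y,Q}(x) = (2π)^{−d/2} (det Q)^{−1/2} exp(−(1/2)(x − y)ᵀ Q⁻¹ (x − y))`. -/
noncomputable def gaussianFn (d : ℕ) (y : Fin d → ℝ)
    (Q : Matrix (Fin d) (Fin d) ℝ) (x : Fin d → ℝ) : ℝ :=
  (2 * π) ^ (-(d : ℝ) / 2) * Q.det ^ (-(1 : ℝ) / 2) *
    Real.exp (-(1 / 2) * ((x - y) ⬝ᵥ Q⁻¹.mulVec (x - y)))

namespace Matrix

variable {n K : Type*} [Fintype n] [CommRing K]

theorem IsSymm.mulVec_dotProduct_mulVec {P : Matrix n n K} (hP : P.IsSymm) (M : Matrix n n K)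
    (u v : n → K) : P *ᵥ u ⬝ᵥ M *ᵥ v = u ⬝ᵥ (P * M) *ᵥ v := by
  rw [← vecMul_transpose, ← dotProduct_mulVec, hP.eq, mulVec_mulVec]

variable [DecidableEq n]

theorem inv_add_inv_inv {P R : Matrix n n K} (hP : IsUnit P.det) (hR : IsUnit R.det) :
    (P⁻¹ + R⁻¹)⁻¹ = P * (P + R)⁻¹ * R := by
  have : P⁻¹ + R⁻¹ = R⁻¹ * (P + R) * P⁻¹ := by
    rw [Matrix.mul_add, Matrix.add_mul, nonsing_inv_mul _ hR, Matrix.one_mul,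
      Matrix.mul_assoc, mul_nonsing_inv _ hP, Matrix.mul_one, add_comm]
  rw [this, mul_inv_rev, mul_inv_rev, nonsing_inv_nonsing_inv _ hP,
    nonsing_inv_nonsing_inv _ hR, Matrix.mul_assoc]

theorem quadForm_add_quadForm {P R : Matrix n n K} (hP : P.IsSymm) (hR : R.IsSymm)
    (hPu : IsUnit P.det) (hRu : IsUnit R.det) (hS : IsUnit (P + R).det) (u w : n → K) :
    u ⬝ᵥ P *ᵥ u + w ⬝ᵥ R *ᵥ w =
      (P *ᵥ u + R *ᵥ w) ⬝ᵥ (P + R)⁻¹ *ᵥ (P *ᵥ u + R *ᵥ w) +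
        (w - u) ⬝ᵥ (P⁻¹ + R⁻¹)⁻¹ *ᵥ (w - u) := by
  set W := (P⁻¹ + R⁻¹)⁻¹
  have hPR : P * (P + R)⁻¹ * R = W := (inv_add_inv_inv hPu hRu).symm
  have hRP : R * (P + R)⁻¹ * P = W := by
    rw [add_comm P, ← inv_add_inv_inv hRu hPu, add_comm]
  have hPP : P * (P + R)⁻¹ * P = P - W := by
    rw [← hPR, eq_sub_iff_add_eq, ← Matrix.mul_add, Matrix.mul_assoc,
      nonsing_inv_mul _ hS, Matrix.mul_one]
  have hRR : R * (P + R)⁻¹ * R = R - W := by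
    rw [← hRP, eq_sub_iff_add_eq, ← Matrix.mul_add, Matrix.mul_assoc, add_comm P,
      nonsing_inv_mul _ (add_comm P R ▸ hS), Matrix.mul_one]
  simp only [mulVec_add, add_dotProduct, dotProduct_add, hP.mulVec_dotProduct_mulVec,
    hR.mulVec_dotProduct_mulVec, mulVec_mulVec, ← Matrix.mul_assoc, hPR, hRP, hPP, hRR,
    sub_mulVec, mulVec_sub, dotProduct_sub, sub_dotProduct]
  ring

theorem quadForm_sub_add_quadForm_sub {P R : Matrix n n K} (hP : P.IsSymm) (hR : R.IsSymm)
    (hPu : IsUnit P.det) (hRu : IsUnit R.det) (hS : IsUnit (P + R).det) (a b y : n → K) :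
    (y - a) ⬝ᵥ P *ᵥ (y - a) + (y - b) ⬝ᵥ R *ᵥ (y - b) =
      (y - (P + R)⁻¹ *ᵥ (P *ᵥ a + R *ᵥ b)) ⬝ᵥ (P + R) *ᵥ (y - (P + R)⁻¹ *ᵥ (P *ᵥ a + R *ᵥ b)) +
        (a - b) ⬝ᵥ (P⁻¹ + R⁻¹)⁻¹ *ᵥ (a - b) := by
  have hv : P *ᵥ (y - a) + R *ᵥ (y - b) = (P + R) *ᵥ y - (P *ᵥ a + R *ᵥ b) := by
    simp only [mulVec_sub, add_mulVec]; abel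
  have hy : y - (P + R)⁻¹ *ᵥ (P *ᵥ a + R *ᵥ b) = (P + R)⁻¹ *ᵥ (P *ᵥ (y - a) + R *ᵥ (y - b)) := by
    rw [hv, mulVec_sub, mulVec_mulVec, nonsing_inv_mul _ hS, one_mulVec]
  rw [quadForm_add_quadForm hP hR hPu hRu hS, hy, mulVec_mulVec, mul_nonsing_inv _ hS,
    one_mulVec, dotProduct_comm _ (P *ᵥ (y - a) + R *ᵥ (y - b)), sub_sub_sub_cancel_left]

end Matrix

section GaussianIntegral

variable {ι : Type*} [Fintype ι]

theorem integral_exp_neg_half_dotProduct_self :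
    ∫ z : ι → ℝ, exp (-(1 / 2) * (z ⬝ᵥ z)) = (2 * π) ^ (Fintype.card ι / 2 : ℝ) := by
  have hprod (z : ι → ℝ) : exp (-(1 / 2) * (z ⬝ᵥ z)) = ∏ i, exp (-(1 / 2) * z i ^ 2) := by
    simp only [dotProduct, Finset.mul_sum, exp_sum, sq]
  simp_rw [hprod]
  rw [integral_fintype_prod_volume_eq_prod (fun _ x => exp (-(1 / 2) * x ^ 2)), integral_gaussian,
    Finset.prod_const, Finset.card_univ, sqrt_eq_rpow, ← rpow_natCast, ← rpow_mul (by positivity)]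
  congr 1 <;> ring

variable [DecidableEq ι]

theorem integral_comp_mulVec {E : Type*} [NormedAddCommGroup E] [NormedSpace ℝ E]
    {M : Matrix ι ι ℝ} (hM : M.det ≠ 0) (f : (ι → ℝ) → E) :
    ∫ y, f (M *ᵥ y) = |M.det|⁻¹ • ∫ z, f z := by
  let e := ((toLin' M).equivOfDetNeZero (by rwa [LinearMap.det_toLin'])).toContinuousLinearEquiv
  have hmap : Measure.map e volume = ENNReal.ofReal |M.det|⁻¹ • volume := by
    rw [← abs_inv]; exact map_matrix_volume_pi_eq_smul_volume_pi hM
  calc ∫ y, f (M *ᵥ y) = ∫ y, f (e y) := rfl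
    _ = ∫ z, f z ∂(Measure.map e volume) :=
      (e.toHomeomorph.measurableEmbedding.integral_map f).symm
    _ = |M.det|⁻¹ • ∫ z, f z := by
      rw [hmap, integral_smul_measure, ENNReal.toReal_ofReal (by positivity)]

open scoped MatrixOrder in
theorem integral_exp_neg_half_quadForm {P : Matrix ι ι ℝ} (hP : P.PosDef) (m : ι → ℝ) :
    ∫ y, exp (-(1 / 2) * ((y - m) ⬝ᵥ P *ᵥ (y - m))) =
      (2 * π) ^ (Fintype.card ι / 2 : ℝ) * P.det ^ (-(1 : ℝ) / 2) := by
  obtain ⟨B, rfl⟩ := CStarAlgebra.nonneg_iff_eq_star_mul_self.mp hP.posSemidef.nonneg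
  have hdet : (star B * B).det = B.det ^ 2 := by
    rw [star_eq_conjTranspose, det_mul, det_conjTranspose, star_trivial, sq]
  have hB : B.det ≠ 0 := fun h => hP.det_pos.ne' (by rw [hdet, h, zero_pow two_ne_zero])
  have hquad (z : ι → ℝ) : z ⬝ᵥ (star B * B) *ᵥ z = B *ᵥ z ⬝ᵥ B *ᵥ z := by
    rw [star_eq_conjTranspose, conjTranspose_eq_transpose_of_trivial, ← mulVec_mulVec,
      dotProduct_mulVec, vecMul_transpose]
  rw [integral_sub_right_eq_self (fun y => exp (-(1 / 2) * (y ⬝ᵥ (star B * B) *ᵥ y))) m]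
  simp_rw [hquad]
  rw [integral_comp_mulVec hB (fun z => exp (-(1 / 2) * (z ⬝ᵥ z))),
    integral_exp_neg_half_dotProduct_self, smul_eq_mul, mul_comm, hdet, ← sq_abs, ← rpow_natCast,
    ← rpow_mul (abs_nonneg _)]
  norm_num [rpow_neg_one]

end GaussianIntegral

section gaussianFn

variable {d : ℕ}

theorem gaussianFn_zero_sub (Q : Matrix (Fin d) (Fin d) ℝ) (m x : Fin d → ℝ) :
    gaussianFn d 0 Q (x - m) = gaussianFn d m Q x := by
  simp only [gaussianFn, sub_zero]

theorem gaussianFn_comm (Q : Matrix (Fin d) (Fin d) ℝ) (m x : Fin d → ℝ) :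
    gaussianFn d m Q x = gaussianFn d x Q m := by
  simp only [gaussianFn, ← neg_sub x m, mulVec_neg, neg_dotProduct, dotProduct_neg, neg_neg]

theorem integral_gaussianFn {Q : Matrix (Fin d) (Fin d) ℝ} (hQ : Q.PosDef) (m : Fin d → ℝ) :
    ∫ x, gaussianFn d m Q x = 1 := by
  have hdet := hQ.det_pos
  have hπ : (2 * π) ^ (-(d : ℝ) / 2) * (2 * π) ^ (d / 2 : ℝ) = 1 := by
    rw [← rpow_add (by positivity), neg_div, neg_add_cancel, rpow_zero]
  have hQdet : Q.det ^ (-(1 : ℝ) / 2) * Q⁻¹.det ^ (-(1 : ℝ) / 2) = 1 := by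
    rw [← mul_rpow hdet.le (by simpa using hdet.le), det_nonsing_inv, Ring.inverse_eq_inv',
      mul_inv_cancel₀ hdet.ne', one_rpow]
  simp only [gaussianFn]
  rw [integral_const_mul, integral_exp_neg_half_quadForm hQ.inv, Fintype.card_fin,
    mul_mul_mul_comm, hπ, hQdet, one_mul]

theorem gaussianFn_mul_gaussianFn {A B : Matrix (Fin d) (Fin d) ℝ} (hA : A.PosDef) (hB : B.PosDef)
    (a b y : Fin d → ℝ) :
    gaussianFn d a A y * gaussianFn d b B y =
      gaussianFn d 0 (A + B) (a - b) *
        gaussianFn d ((A⁻¹ + B⁻¹)⁻¹ *ᵥ (A⁻¹ *ᵥ a + B⁻¹ *ᵥ b)) (A⁻¹ + B⁻¹)⁻¹ y := by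
  have hAu : IsUnit A.det := hA.det_pos.ne'.isUnit
  have hBu : IsUnit B.det := hB.det_pos.ne'.isUnit
  have hU := hA.inv.add hB.inv
  have hC := hU.inv
  have hquad := quadForm_sub_add_quadForm_sub (isHermitian_iff_isSymm.mp hA.inv.isHermitian)
    (isHermitian_iff_isSymm.mp hB.inv.isHermitian) hA.inv.det_pos.ne'.isUnit
    hB.inv.det_pos.ne'.isUnit hU.det_pos.ne'.isUnit a b y
  rw [nonsing_inv_nonsing_inv _ hAu, nonsing_inv_nonsing_inv _ hBu] at hquad
  have hdet : A.det * B.det = (A + B).det * ((A⁻¹ + B⁻¹)⁻¹).det := by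
    have := (hA.add hB).det_pos.ne'
    rw [inv_add_inv_inv hAu hBu, det_mul, det_mul, det_nonsing_inv, Ring.inverse_eq_inv']
    field_simp
  have hconst : A.det ^ (-(1 : ℝ) / 2) * B.det ^ (-(1 : ℝ) / 2) =
      (A + B).det ^ (-(1 : ℝ) / 2) * ((A⁻¹ + B⁻¹)⁻¹).det ^ (-(1 : ℝ) / 2) := by
    rw [← mul_rpow hA.det_pos.le hB.det_pos.le, hdet,
      mul_rpow (hA.add hB).det_pos.le hC.det_pos.le]
  have hexp := congrArg (fun t => exp (-(1 / 2) * t)) hquad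
  simp only [mul_add, exp_add] at hexp
  simp only [gaussianFn, sub_zero, nonsing_inv_nonsing_inv _ hU.det_pos.ne'.isUnit]
  linear_combination (2 * π) ^ (-(d : ℝ) / 2) * (2 * π) ^ (-(d : ℝ) / 2) *
    congrArg₂ (· * ·) hconst hexp

theorem gaussianFn_sq {Q : Matrix (Fin d) (Fin d) ℝ} (hQ : Q.PosDef) (m x : Fin d → ℝ) :
    gaussianFn d m Q x ^ 2 =
      (4 * π) ^ (-(d : ℝ) / 2) * Q.det ^ (-(1 : ℝ) / 2) * gaussianFn d m ((1 / 2 : ℝ) • Q) x := by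
  have hdet : ((1 / 2 : ℝ) • Q).det = (1 / 2) ^ d * Q.det := by
    rw [det_smul, Fintype.card_fin]
  have hinv : ((1 / 2 : ℝ) • Q)⁻¹ = (2 : ℝ) • Q⁻¹ := by
    refine inv_eq_left_inv ?_
    rw [Matrix.smul_mul, Matrix.mul_smul, smul_smul, nonsing_inv_mul _ hQ.det_pos.ne'.isUnit]
    norm_num
  have hπ : (4 * π) ^ (-(d : ℝ) / 2) * ((1 / 2 : ℝ) ^ d) ^ (-(1 : ℝ) / 2) =
      (2 * π) ^ (-(d : ℝ) / 2) := by
    rw [← rpow_natCast, ← rpow_mul (by norm_num), show (d : ℝ) * (-1 / 2) = -d / 2 by ring,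
      ← mul_rpow (by positivity) (by norm_num)]
    ring_nf
  have hexp (t : ℝ) : exp (-(1 / 2) * (2 * t)) = exp (-(1 / 2) * t) ^ 2 := by
    rw [sq, ← exp_add]; ring_nf
  simp only [gaussianFn, hdet, hinv, smul_mulVec, dotProduct_smul, smul_eq_mul, hexp,
    mul_rpow (by norm_num : (0 : ℝ) ≤ (1 / 2) ^ d) hQ.det_pos.le]
  rw [← hπ]
  ring

theorem integral_gaussianFn_mul_gaussianFn {A B : Matrix (Fin d) (Fin d) ℝ} (hA : A.PosDef)
    (hB : B.PosDef) (a b : Fin d → ℝ) :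
    ∫ y, gaussianFn d a A y * gaussianFn d b B y = gaussianFn d 0 (A + B) (a - b) := by
  simp_rw [gaussianFn_mul_gaussianFn hA hB]
  rw [integral_const_mul, integral_gaussianFn (hA.inv.add hB.inv).inv, mul_one]

end gaussianFn

theorem gaussian_product_square_convolution_general
    (d : ℕ)
    (Q₁ Q₂ Q₃ : Matrix (Fin d) (Fin d) ℝ)
    (hQ₁ : Q₁.PosDef) (hQ₂ : Q₂.PosDef) (hQ₃ : Q₃.PosDef)
    (y₁ y₂ : Fin d → ℝ) (x : Fin d → ℝ) :
    (∫ y : Fin d → ℝ,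
        gaussianFn d y₁ Q₁ y * gaussianFn d y₂ Q₂ y *
          (gaussianFn d 0 Q₃ (x - y)) ^ 2)
      =
    (4 * π) ^ (-(d : ℝ) / 2) * Q₃.det ^ (-(1 : ℝ) / 2) *
      gaussianFn d 0 (Q₁ + Q₂) (y₁ - y₂) *
      gaussianFn d
        ((Q₁⁻¹ + Q₂⁻¹)⁻¹.mulVec (Q₁⁻¹.mulVec y₁ + Q₂⁻¹.mulVec y₂))
        ((Q₁⁻¹ + Q₂⁻¹)⁻¹ + (1 / 2 : ℝ) • Q₃) x := by
  set y₁₂ := (Q₁⁻¹ + Q₂⁻¹)⁻¹ *ᵥ (Q₁⁻¹ *ᵥ y₁ + Q₂⁻¹ *ᵥ y₂)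
  have hintegrand (y : Fin d → ℝ) :
      gaussianFn d y₁ Q₁ y * gaussianFn d y₂ Q₂ y * gaussianFn d 0 Q₃ (x - y) ^ 2 =
        (4 * π) ^ (-(d : ℝ) / 2) * Q₃.det ^ (-(1 : ℝ) / 2) * gaussianFn d 0 (Q₁ + Q₂) (y₁ - y₂) *
          (gaussianFn d y₁₂ (Q₁⁻¹ + Q₂⁻¹)⁻¹ y * gaussianFn d x ((1 / 2 : ℝ) • Q₃) y) := by
    rw [gaussianFn_mul_gaussianFn hQ₁ hQ₂, gaussianFn_zero_sub Q₃ y x, gaussianFn_sq hQ₃,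
      gaussianFn_comm _ y x]
    ring
  simp_rw [hintegrand]
  rw [integral_const_mul, integral_gaussianFn_mul_gaussianFn (hQ₁.inv.add hQ₂.inv).inv
    (hQ₃.smul (by norm_num)), gaussianFn_zero_sub _ x y₁₂, gaussianFn_comm _ x]

/-- **Convolution of a product of two Gaussians with a squared centered Gaussian
(Appendix A).**  With `Q₁₂ = (Q₁⁻¹ + Q₂⁻¹)⁻¹` and
`y₁₂ = Q₁₂(Q₁⁻¹ y₁ + Q₂⁻¹ y₂)`, one has for every `x`:
`∫ G_{y₁,Q₁}(y) G_{y₂,Q₂}(y) G_{Q₃}(x − y)² dy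
  = (4π)^{−d/2} (det Q₃)^{−1/2} G_{Q₁+Q₂}(y₁ − y₂) G_{y₁₂, Q₁₂ + Q₃/2}(x)`. -/
theorem gaussian_product_square_convolution
    (d : ℕ) (hd : 1 ≤ d)
    (Q₁ Q₂ Q₃ : Matrix (Fin d) (Fin d) ℝ)
    (hQ₁ : Q₁.PosDef) (hQ₂ : Q₂.PosDef) (hQ₃ : Q₃.PosDef)
    (y₁ y₂ : Fin d → ℝ) (x : Fin d → ℝ) :
    (∫ y : Fin d → ℝ,
        gaussianFn d y₁ Q₁ y * gaussianFn d y₂ Q₂ y *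
          (gaussianFn d 0 Q₃ (x - y)) ^ 2)
      =
    (4 * π) ^ (-(d : ℝ) / 2) * Q₃.det ^ (-(1 : ℝ) / 2) *
      gaussianFn d 0 (Q₁ + Q₂) (y₁ - y₂) *
      gaussianFn d
        ((Q₁⁻¹ + Q₂⁻¹)⁻¹.mulVec (Q₁⁻¹.mulVec y₁ + Q₂⁻¹.mulVec y₂))
        ((Q₁⁻¹ + Q₂⁻¹)⁻¹ + (1 / 2 : ℝ) • Q₃) x :=
  gaussian_product_square_convolution_general d Q₁ Q₂ Q₃ hQ₁ hQ₂ hQ₃ y₁ y₂ x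
end

section
/- Let d ≥ 1, let K : ℝ^d → ℝ be a probability density satisfying the moment conditions ∫ t_i K(t) dt = 0 and ∫ t_i t_j K(t) dt = δ_{ij} for all i, j, as well as ∫ ‖t‖³ K(t) dt < ∞. Let ρ ∈ C³(ℝ^d) have bounded derivatives up to order three, let h₀ ∈ GL(d,ℝ), x ∈ ℝ^d, and let H = D²ρ(x) denote the Hessian of ρ at x. Then lim_{ε → 0⁺} ε^{−2} ( ∫_{ℝ^d} K(t) ρ(x − ε h₀ t) dt − ρ(x) ) = (1/2) tr(h₀ᵀ H h₀); i.e. the bias of the kernel density estimate with bandwidth matrix h = ε h₀ at x equals (1/2) tr(hᵀ H h) to leading order. -/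
open MeasureTheory Matrix Filter Topology

/-!
Taylor-expand `ρ` to second order at `x`, with remainder at most `‖D³ρ‖∞ ‖v‖³ / 2`, and integrate
against `K` along `v = -ε h₀ t`. The constant term gives `ρ x`, the linear term vanishes by the
first-moment condition, the second-moment condition turns the quadratic term into
`ε² tr (h₀ᵀ H h₀) / 2`, and the third-moment condition makes the remainder `O(ε³)`.
-/

section Taylor
variable {E F : Type*} [NormedAddCommGroup E] [NormedSpace ℝ E]
  [NormedAddCommGroup F] [NormedSpace ℝ F] [CompleteSpace F]

theorem norm_sub_taylor_two_le {f : E → F} (hf : ContDiff ℝ 3 f) {C : ℝ}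
    (hC : ∀ z, ‖iteratedFDeriv ℝ 3 f z‖ ≤ C) (x y : E) :
    ‖f (x + y) - f x - fderiv ℝ f x y - (2 : ℝ)⁻¹ • fderiv ℝ (fderiv ℝ f) x y y‖
      ≤ C / 2 * ‖y‖ ^ 3 := by
  have htaylor := map_add_eq_sum_add_integral_iteratedFDeriv (n := 2) (x := x) (y := y)
    fun t _ => hf.contDiffAt
  set I := ∫ t in (0 : ℝ)..1, (1 - t) ^ 2 • iteratedFDeriv ℝ 3 f (x + t • y) (fun _ ↦ y)
  have hrem : ‖I‖ ≤ C * ‖y‖ ^ 3 := by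
    refine (intervalIntegral.norm_integral_le_of_norm_le_const fun t ht => ?_).trans_eq
      (b := C * ‖y‖ ^ 3 * |1 - 0|) (by norm_num)
    rw [Set.uIoc_of_le zero_le_one] at ht
    calc ‖(1 - t) ^ 2 • iteratedFDeriv ℝ 3 f (x + t • y) (fun _ ↦ y)‖
        ≤ 1 * (C * ∏ _ : Fin 3, ‖y‖) := by
          rw [norm_smul]
          gcongr
          · rw [norm_pow, Real.norm_eq_abs, abs_of_nonneg (by linarith [ht.2])]
            exact pow_le_one₀ (by linarith [ht.2]) (by linarith [ht.1])
          · exact ((iteratedFDeriv ℝ 3 f _).le_opNorm _).trans (by gcongr; exact hC _)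
      _ = C * ‖y‖ ^ 3 := by simp
  have hexp : f (x + y) - f x - fderiv ℝ f x y - (2 : ℝ)⁻¹ • fderiv ℝ (fderiv ℝ f) x y y
      = (2 : ℝ)⁻¹ • I := by
    rw [htaylor]
    simp only [Finset.sum_range_succ, Finset.range_one, Finset.sum_singleton, Nat.factorial_zero,
      Nat.factorial_one, Nat.factorial_two, Nat.cast_one, Nat.cast_ofNat, inv_one, one_smul,
      iteratedFDeriv_zero_apply, iteratedFDeriv_one_apply, iteratedFDeriv_two_apply]
    abel
  calc _ = 2⁻¹ * ‖I‖ := by rw [hexp, norm_smul, norm_inv, Real.norm_two]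
    _ ≤ 2⁻¹ * (C * ‖y‖ ^ 3) := by gcongr
    _ = C / 2 * ‖y‖ ^ 3 := by ring

end Taylor

theorem pow_le_one_add_pow {s : ℝ} (hs : 0 ≤ s) {k n : ℕ} (hkn : k ≤ n) : s ^ k ≤ 1 + s ^ n := by
  rcases le_total s 1 with h | h
  · linarith [pow_le_one₀ hs h (n := k), pow_nonneg hs n]
  · linarith [pow_le_pow_right₀ h hkn]

section Moments
variable {E : Type*} [NormedAddCommGroup E] [MeasurableSpace E] {μ : Measure E} {K : E → ℝ}

theorem integrable_mul_of_abs_le_norm_pow {n : ℕ} (hK : Integrable K μ)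
    (hKn : Integrable (fun t => ‖t‖ ^ n * K t) μ) {g : E → ℝ} (hg : AEStronglyMeasurable g μ)
    {c : ℝ} {k : ℕ} (hkn : k ≤ n) (hgc : ∀ t, |g t| ≤ c * ‖t‖ ^ k) :
    Integrable (fun t => K t * g t) μ := by
  refine ((hK.norm.add hKn.norm).const_mul |c|).mono' (hK.1.mul hg) (.of_forall fun t => ?_)
  calc ‖K t * g t‖ = |K t| * |g t| := abs_mul _ _
    _ ≤ |K t| * (|c| * (1 + ‖t‖ ^ n)) := by
        gcongr
        exact (hgc t).trans (mul_le_mul (le_abs_self c)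
          (pow_le_one_add_pow (norm_nonneg t) hkn) (by positivity) (abs_nonneg c))
    _ = |c| * (‖K t‖ + ‖‖t‖ ^ n * K t‖) := by
        simp only [Real.norm_eq_abs, abs_mul, abs_pow, abs_norm]; ring

end Moments

theorem Matrix.mulVec_dotProduct_mulVec_mulVec {ι R : Type*} [Fintype ι] [CommSemiring R]
    (A M : Matrix ι ι R) (t : ι → R) :
    A *ᵥ t ⬝ᵥ M *ᵥ (A *ᵥ t) = t ⬝ᵥ (Aᵀ * M * A) *ᵥ t := by
  rw [mulVec_mulVec, dotProduct_mulVec, dotProduct_mulVec, ← vecMul_transpose, vecMul_vecMul,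
    Matrix.mul_assoc]

theorem ContinuousLinearMap.apply_apply_eq_dotProduct_mulVec {ι : Type*} [Fintype ι]
    [DecidableEq ι] (B : (ι → ℝ) →L[ℝ] (ι → ℝ) →L[ℝ] ℝ) (u w : ι → ℝ) :
    B u w = u ⬝ᵥ (Matrix.of fun i j => B (Pi.single i 1) (Pi.single j 1)) *ᵥ w := by
  conv_lhs => rw [pi_eq_sum_univ' u, pi_eq_sum_univ' w]
  simp only [map_sum, map_smul, FunLike.coe_sum, FunLike.coe_smul, Finset.sum_apply,
    Pi.smul_apply, smul_eq_mul, dotProduct, mulVec, of_apply, Finset.mul_sum]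
  rw [Finset.sum_comm]
  exact Finset.sum_congr rfl fun i _ => Finset.sum_congr rfl fun j _ => by ring

section Coordinates
variable {ι : Type*} [Fintype ι] [DecidableEq ι] {μ : Measure (ι → ℝ)} {K : (ι → ℝ) → ℝ}

theorem integral_mul_clm_eq_zero (hK : Integrable K μ)
    (hK3 : Integrable (fun t => ‖t‖ ^ 3 * K t) μ) (hmom1 : ∀ i, ∫ t, t i * K t ∂μ = 0)
    (ℓ : (ι → ℝ) →L[ℝ] ℝ) : ∫ t, K t * ℓ t ∂μ = 0 := by
  have hcoord : ∀ i, Integrable (fun t => K t * t i) μ := fun i =>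
    integrable_mul_of_abs_le_norm_pow hK hK3 (measurable_pi_apply i).aestronglyMeasurable
      (c := 1) (k := 1) (by norm_num) fun t => by simpa using norm_le_pi_norm t i
  have hexp : ∀ t, K t * ℓ t = ∑ i, ℓ (Pi.single i 1) * (K t * t i) := fun t => by
    have hℓ : ℓ t = ∑ i, t i * ℓ (Pi.single i 1) := by
      conv_lhs => rw [pi_eq_sum_univ' t]
      simp only [map_sum, map_smul, smul_eq_mul]
    rw [hℓ, Finset.mul_sum]
    exact Finset.sum_congr rfl fun i _ => by ring
  simp_rw [hexp]
  rw [integral_finsetSum _ fun i _ => (hcoord i).const_mul _]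
  simp [integral_const_mul, mul_comm (K _), hmom1]

theorem integral_mul_dotProduct_mulVec_self (hK : Integrable K μ)
    (hK3 : Integrable (fun t => ‖t‖ ^ 3 * K t) μ)
    (hmom2 : ∀ i j, ∫ t, t i * t j * K t ∂μ = if i = j then 1 else 0) (M : Matrix ι ι ℝ) :
    ∫ t, K t * (t ⬝ᵥ M *ᵥ t) ∂μ = M.trace := by
  have hcoord : ∀ i j, Integrable (fun t => K t * (t i * t j)) μ := fun i j =>
    integrable_mul_of_abs_le_norm_pow hK hK3
      ((measurable_pi_apply i).mul (measurable_pi_apply j)).aestronglyMeasurable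
      (c := 1) (k := 2) (by norm_num) fun t => by
        rw [abs_mul, one_mul, sq]
        exact mul_le_mul (by simpa using norm_le_pi_norm t i) (by simpa using norm_le_pi_norm t j)
          (abs_nonneg _) (norm_nonneg _)
  have hexp : ∀ t, K t * (t ⬝ᵥ M *ᵥ t) = ∑ i, ∑ j, M i j * (K t * (t i * t j)) := fun t => by
    simp only [dotProduct, mulVec, Finset.mul_sum]
    refine Finset.sum_congr rfl fun i _ => Finset.sum_congr rfl fun j _ => by ring
  simp_rw [hexp]
  have hrow : ∀ i, Integrable (fun t => ∑ j, M i j * (K t * (t i * t j))) μ := fun i =>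
    integrable_finsetSum _ fun j _ => (hcoord i j).const_mul _
  rw [integral_finsetSum _ fun i _ => hrow i]
  simp_rw [integral_finsetSum _ fun j _ => (hcoord _ j).const_mul _, integral_const_mul]
  simp [mul_comm (K _), hmom2, Matrix.trace]

theorem fderiv_fderiv_apply_eq_dotProduct_mulVec {f : (ι → ℝ) → ℝ} {x : ι → ℝ}
    (hf : DifferentiableAt ℝ (fderiv ℝ f) x) {H : Matrix ι ι ℝ}
    (hH : ∀ i j, H i j = fderiv ℝ (fun z => fderiv ℝ f z (Pi.single j 1)) x (Pi.single i 1))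
    (u w : ι → ℝ) : fderiv ℝ (fderiv ℝ f) x u w = u ⬝ᵥ H *ᵥ w := by
  convert (fderiv ℝ (fderiv ℝ f) x).apply_apply_eq_dotProduct_mulVec u w
  ext i j
  rw [hH, fderiv_clm_apply hf (differentiableAt_const _)]
  simp

theorem integral_mul_fderiv_fderiv_mulVec_eq_trace (hK : Integrable K μ)
    (hK3 : Integrable (fun t => ‖t‖ ^ 3 * K t) μ)
    (hmom2 : ∀ i j, ∫ t, t i * t j * K t ∂μ = if i = j then 1 else 0)
    {f : (ι → ℝ) → ℝ} {x : ι → ℝ} (hf : DifferentiableAt ℝ (fderiv ℝ f) x) {H : Matrix ι ι ℝ}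
    (hH : ∀ i j, H i j = fderiv ℝ (fun z => fderiv ℝ f z (Pi.single j 1)) x (Pi.single i 1))
    (A : Matrix ι ι ℝ) :
    ∫ t, K t * fderiv ℝ (fderiv ℝ f) x (A *ᵥ t) (A *ᵥ t) ∂μ = (Aᵀ * H * A).trace := by
  simp_rw [fderiv_fderiv_apply_eq_dotProduct_mulVec hf hH, mulVec_dotProduct_mulVec_mulVec]
  exact integral_mul_dotProduct_mulVec_self hK hK3 hmom2 _

end Coordinates

section KernelSmoothing
variable {E F : Type*} [NormedAddCommGroup E] [NormedSpace ℝ E] [MeasurableSpace E]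
  [OpensMeasurableSpace E] [NormedAddCommGroup F] [NormedSpace ℝ F] {μ : Measure E} {K : E → ℝ}

theorem abs_integral_mul_sub_taylor_two_le {f : F → ℝ} (hf : ContDiff ℝ 3 f) {C : ℝ}
    (hC : ∀ z, ‖iteratedFDeriv ℝ 3 f z‖ ≤ C) (hK : Integrable K μ) (hK_int : ∫ t, K t ∂μ = 1)
    (hmom1 : ∀ ℓ : E →L[ℝ] ℝ, ∫ t, K t * ℓ t ∂μ = 0)
    (hK3 : Integrable (fun t => ‖t‖ ^ 3 * K t) μ) (x : F) (L : E →L[ℝ] F) :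
    |∫ t, K t * f (x + L t) ∂μ - f x
        - 2⁻¹ * ∫ t, K t * fderiv ℝ (fderiv ℝ f) x (L t) (L t) ∂μ|
      ≤ C / 2 * ‖L‖ ^ 3 * ∫ t, ‖t‖ ^ 3 * |K t| ∂μ := by
  set D1 := fderiv ℝ f x
  set D2 := fderiv ℝ (fderiv ℝ f) x
  set R : E → ℝ := fun t => f (x + L t) - f x - D1 (L t) - 2⁻¹ * D2 (L t) (L t) with hR_def
  have hR : ∀ t, |R t| ≤ C / 2 * ‖L‖ ^ 3 * ‖t‖ ^ 3 := fun t => by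
    have hC0 : 0 ≤ C := (norm_nonneg _).trans (hC x)
    calc |R t| ≤ C / 2 * ‖L t‖ ^ 3 := by simpa using norm_sub_taylor_two_le hf hC x (L t)
      _ ≤ C / 2 * (‖L‖ * ‖t‖) ^ 3 := by gcongr; exact L.le_opNorm t
      _ = C / 2 * ‖L‖ ^ 3 * ‖t‖ ^ 3 := by ring
  have hlin : Integrable (fun t => K t * (D1.comp L) t) μ :=
    integrable_mul_of_abs_le_norm_pow hK hK3 (D1.comp L).continuous.aestronglyMeasurable
      (k := 1) (by norm_num) fun t => by simpa using (D1.comp L).le_opNorm t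
  have hD2c : Continuous fun t => D2 (L t) (L t) :=
    (D2.continuous.comp L.continuous).clm_apply L.continuous
  have hquad : Integrable (fun t => K t * D2 (L t) (L t)) μ :=
    integrable_mul_of_abs_le_norm_pow hK hK3 hD2c.aestronglyMeasurable (k := 2) (by norm_num)
      fun t => by simpa [sq, mul_assoc] using (D2.bilinearComp L L).le_opNorm₂ t t
  have hrem : Integrable (fun t => K t * R t) μ := by
    have hf_cont := hf.continuous
    exact integrable_mul_of_abs_le_norm_pow hK hK3 (by fun_prop) le_rfl hR
  have hsplit : ∀ t, K t * f (x + L t)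
      = K t * f x + K t * (D1.comp L) t + 2⁻¹ * (K t * D2 (L t) (L t)) + K t * R t := fun t => by
    simp only [hR_def, ContinuousLinearMap.comp_apply]; ring
  have h0 : Integrable (fun t => K t * f x) μ := hK.mul_const _
  have h01 : Integrable (fun t => K t * f x + K t * (D1.comp L) t) μ := h0.add hlin
  have h012 : Integrable
      (fun t => K t * f x + K t * (D1.comp L) t + 2⁻¹ * (K t * D2 (L t) (L t))) μ :=
    h01.add (hquad.const_mul _)
  have hint : ∫ t, K t * f (x + L t) ∂μ - f x - 2⁻¹ * ∫ t, K t * D2 (L t) (L t) ∂μ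
      = ∫ t, K t * R t ∂μ := by
    simp_rw [hsplit]
    rw [integral_add h012 hrem, integral_add h01 (hquad.const_mul _), integral_add h0 hlin,
      integral_mul_const, hK_int, hmom1, integral_const_mul]
    ring
  have hK3' : Integrable (fun t => ‖t‖ ^ 3 * |K t|) μ := by
    simpa [abs_mul] using hK3.norm
  rw [hint, ← integral_const_mul]
  refine (Real.norm_eq_abs _).symm.trans_le
    (norm_integral_le_of_norm_le (hK3'.const_mul _) (.of_forall fun t => ?_))
  calc ‖K t * R t‖ = |K t| * |R t| := abs_mul _ _
    _ ≤ |K t| * (C / 2 * ‖L‖ ^ 3 * ‖t‖ ^ 3) := by gcongr; exact hR t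
    _ = C / 2 * ‖L‖ ^ 3 * (‖t‖ ^ 3 * |K t|) := by ring
end KernelSmoothing

theorem tendsto_inv_sq_mul_of_abs_sub_le {q : ℝ → ℝ} {a c : ℝ}
    (hq : ∀ ε, |q ε - ε ^ 2 * a| ≤ c * |ε| ^ 3) :
    Tendsto (fun ε => (ε ^ 2)⁻¹ * q ε) (𝓝[≠] 0) (𝓝 a) := by
  have hbound : ∀ᶠ ε in 𝓝[≠] 0, ‖(ε ^ 2)⁻¹ * q ε - a‖ ≤ c * |ε| := by
    filter_upwards [self_mem_nhdsWithin] with ε (hε : ε ≠ 0)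
    have hε2 : 0 < ε ^ 2 := by positivity
    rw [Real.norm_eq_abs, show (ε ^ 2)⁻¹ * q ε - a = (ε ^ 2)⁻¹ * (q ε - ε ^ 2 * a) by
      field_simp, abs_mul, abs_inv, abs_of_pos hε2, inv_mul_le_iff₀ hε2]
    calc |q ε - ε ^ 2 * a| ≤ c * |ε| ^ 3 := hq ε
      _ = ε ^ 2 * (c * |ε|) := by rw [← sq_abs ε]; ring
  have hlim : Tendsto (fun ε : ℝ => c * |ε|) (𝓝[≠] 0) (𝓝 0) := by
    simpa using ((continuous_abs.const_mul c).tendsto 0).mono_left nhdsWithin_le_nhds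
  exact tendsto_sub_nhds_zero_iff.mp (squeeze_zero_norm' hbound hlim)

theorem kde_bias_leading_term_general
    (d : ℕ)
    (K : (Fin d → ℝ) → ℝ)
    (hK_int : (∫ t : Fin d → ℝ, K t) = 1)
    (hK_mom1 : ∀ i : Fin d, (∫ t : Fin d → ℝ, t i * K t) = 0)
    (hK_mom2 : ∀ i j : Fin d,
      (∫ t : Fin d → ℝ, t i * t j * K t) = if i = j then 1 else 0)
    (hK_mom3 : Integrable (fun t : Fin d → ℝ => ‖t‖ ^ 3 * K t))
    (ρ : (Fin d → ℝ) → ℝ) (hρ_smooth : ContDiff ℝ 3 ρ)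
    (hρ_bdd : ∀ n : ℕ, n ≤ 3 → ∃ C : ℝ, ∀ z, ‖iteratedFDeriv ℝ n ρ z‖ ≤ C)
    (h₀ : Matrix (Fin d) (Fin d) ℝ)
    (x : Fin d → ℝ)
    (H : Matrix (Fin d) (Fin d) ℝ)
    (hH : ∀ i j : Fin d, H i j
      = fderiv ℝ (fun z => fderiv ℝ ρ z (Pi.single j 1)) x (Pi.single i 1)) :
    Tendsto
      (fun ε : ℝ => (ε ^ 2)⁻¹ *
        ((∫ t : Fin d → ℝ, K t * ρ (x - ε • h₀.mulVec t)) - ρ x))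
      (𝓝[>] 0) (𝓝 ((1 / 2) * (h₀ᵀ * H * h₀).trace)) := by
  obtain ⟨C, hC⟩ := hρ_bdd 3 le_rfl
  have hK : Integrable K := .of_integral_ne_zero (by simp [hK_int])
  set L : (Fin d → ℝ) →L[ℝ] (Fin d → ℝ) := (Matrix.toLin' h₀).toContinuousLinearMap
  have hρ_diff : DifferentiableAt ℝ (fderiv ℝ ρ) x :=
    (hρ_smooth.fderiv_right (m := 2) (by norm_num)).differentiable (by norm_num) x
  have hquad : ∀ ε : ℝ, ∫ t, K t * fderiv ℝ (fderiv ℝ ρ) x (((-ε) • L) t) (((-ε) • L) t)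
      = ε ^ 2 * (h₀ᵀ * H * h₀).trace := fun ε => by
    have hpt : ∀ t, K t * fderiv ℝ (fderiv ℝ ρ) x (((-ε) • L) t) (((-ε) • L) t)
        = ε ^ 2 * (K t * fderiv ℝ (fderiv ℝ ρ) x (h₀ *ᵥ t) (h₀ *ᵥ t)) := fun t => by
      simp only [L, _root_.smul_apply, LinearMap.coe_toContinuousLinearMap', toLin'_apply,
        map_smul, smul_eq_mul]
      ring
    simp_rw [hpt, integral_const_mul,
      integral_mul_fderiv_fderiv_mulVec_eq_trace hK hK_mom3 hK_mom2 hρ_diff hH]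
  refine (tendsto_inv_sq_mul_of_abs_sub_le (c := C / 2 * ‖L‖ ^ 3 * ∫ t, ‖t‖ ^ 3 * |K t|)
    fun ε => ?_).mono_left (nhdsGT_le_nhdsNE 0)
  have hshift : ∀ t, x + ((-ε) • L) t = x - ε • h₀ *ᵥ t := fun t => by
    simp [L, sub_eq_add_neg]
  have hbias := abs_integral_mul_sub_taylor_two_le hρ_smooth hC hK hK_int
    (integral_mul_clm_eq_zero hK hK_mom3 hK_mom1) hK_mom3 x ((-ε) • L)
  simp_rw [hshift, hquad, norm_smul, Real.norm_eq_abs, abs_neg] at hbias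
  calc _ = |(∫ t, K t * ρ (x - ε • h₀ *ᵥ t)) - ρ x - 2⁻¹ * (ε ^ 2 * (h₀ᵀ * H * h₀).trace)| := by
        ring_nf
    _ ≤ _ := hbias
    _ = _ := by ring

/-- **Leading term of the bias of the kernel density estimate.**
For a probability density kernel `K` with vanishing first moments, identity
second moments and finite third absolute moment, and `ρ ∈ C³` with bounded
derivatives up to order three, one has
`ε⁻² (∫ K(t) ρ(x − ε h₀ t) dt − ρ(x)) → (1/2) tr(h₀ᵀ H h₀)` as `ε → 0⁺`,
where `H = D²ρ(x)` is the Hessian of `ρ` at `x`; i.e. the bias of the kernel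
density estimate with bandwidth matrix `h = ε h₀` equals `(1/2) tr(hᵀ H h)`
to leading order. -/
theorem kde_bias_leading_term
    (d : ℕ) (hd : 1 ≤ d)
    (K : (Fin d → ℝ) → ℝ) (hK_nonneg : ∀ t, 0 ≤ K t)
    (hK_int : (∫ t : Fin d → ℝ, K t) = 1)
    (hK_mom1 : ∀ i : Fin d, (∫ t : Fin d → ℝ, t i * K t) = 0)
    (hK_mom2 : ∀ i j : Fin d,
      (∫ t : Fin d → ℝ, t i * t j * K t) = if i = j then 1 else 0)
    (hK_mom3 : Integrable (fun t : Fin d → ℝ => ‖t‖ ^ 3 * K t))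
    (ρ : (Fin d → ℝ) → ℝ) (hρ_smooth : ContDiff ℝ 3 ρ)
    (hρ_bdd : ∀ n : ℕ, n ≤ 3 → ∃ C : ℝ, ∀ z, ‖iteratedFDeriv ℝ n ρ z‖ ≤ C)
    (h₀ : Matrix (Fin d) (Fin d) ℝ) (hh₀ : IsUnit h₀.det)
    (x : Fin d → ℝ)
    (H : Matrix (Fin d) (Fin d) ℝ)
    (hH : ∀ i j : Fin d, H i j
      = fderiv ℝ (fun z => fderiv ℝ ρ z (Pi.single j 1)) x (Pi.single i 1)) :
    Tendsto
      (fun ε : ℝ => (ε ^ 2)⁻¹ *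
        ((∫ t : Fin d → ℝ, K t * ρ (x - ε • h₀.mulVec t)) - ρ x))
      (𝓝[>] 0) (𝓝 ((1 / 2) * (h₀ᵀ * H * h₀).trace)) :=
  kde_bias_leading_term_general d K hK_int hK_mom1 hK_mom2 hK_mom3 ρ hρ_smooth hρ_bdd h₀ x H hH
end
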